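/- The open book with page the solid torus and trivial monodromy is S¹ × S³: the quotient of (S¹ × D²) × [0,1] by the equivalence relation generated by ((z,y),1) ∼ ((z,y),0) for all (z,y) ∈ S¹ × D² and ((z,y),t) ∼ ((z,y),t′) for all z ∈ S¹, y with ‖y‖ = 1, and all t,t′ ∈ [0,1] is homeomorphic to S¹ × S³, where S¹ is the unit circle in ℂ, D² the closed unit disk in ℝ², and S³ the unit sphere in ℝ⁴. -/

import Mathlib

noncomputable section
open Real Metric

namespace OpenBookAux

def rr (y : EuclideanSpace ℝ (Fin 2)) : ℝ := Real.sqrt (1 - ‖y‖^2)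

def vmap (y : EuclideanSpace ℝ (Fin 2)) (t : ℝ) : EuclideanSpace ℝ (Fin 4) :=
  WithLp.toLp 2 ![y 0, y 1, rr y * Real.cos (2*π*t), rr y * Real.sin (2*π*t)]

lemma norm_sq2 (y : EuclideanSpace ℝ (Fin 2)) : ‖y‖^2 = y 0 ^2 + y 1 ^2 := by
  rw [EuclideanSpace.norm_eq, Real.sq_sqrt (by positivity)]
  simp [Fin.sum_univ_two, sq_abs]

lemma rr_sq {y : EuclideanSpace ℝ (Fin 2)} (hy : ‖y‖ ≤ 1) : rr y ^ 2 = 1 - ‖y‖^2 :=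
  Real.sq_sqrt (by nlinarith [norm_nonneg y])

lemma vmap_mem (y : EuclideanSpace ℝ (Fin 2)) (hy : ‖y‖ ≤ 1) (t : ℝ) :
    vmap y t ∈ sphere (0 : EuclideanSpace ℝ (Fin 4)) 1 := by
  have hr := rr_sq hy
  rw [mem_sphere_zero_iff_norm, EuclideanSpace.norm_eq]
  rw [show (1:ℝ) = Real.sqrt 1 from (Real.sqrt_one).symm]
  congr 1
  have hc := Real.cos_sq_add_sin_sq (2*π*t)
  simp only [Fin.sum_univ_four, vmap, WithLp.ofLp_toLp, Matrix.cons_val_zero, Matrix.cons_val_one,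
    Matrix.head_cons, Matrix.cons_val_two, Matrix.tail_cons, Matrix.cons_val_three]
  simp only [Real.norm_eq_abs, sq_abs]
  have := norm_sq2 y
  nlinarith [hr, hc]

lemma continuous_vmap : Continuous (fun p : EuclideanSpace ℝ (Fin 2) × ℝ => vmap p.1 p.2) := by
  have hr : Continuous (fun y : EuclideanSpace ℝ (Fin 2) => rr y) := by
    unfold rr; fun_prop
  apply (PiLp.continuous_toLp 2 fun _ : Fin 4 => ℝ).comp
  apply continuous_pi
  intro i
  fin_cases i <;> simp only [vmap, Matrix.cons_val_zero, Matrix.cons_val_one, Matrix.head_cons,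
    Matrix.cons_val_two, Matrix.tail_cons, Matrix.cons_val_three]
  · exact (PiLp.continuous_apply 2 _ 0).comp continuous_fst
  · exact (PiLp.continuous_apply 2 _ 1).comp continuous_fst
  · exact (hr.comp continuous_fst).mul (Real.continuous_cos.comp (by fun_prop))
  · exact (hr.comp continuous_fst).mul (Real.continuous_sin.comp (by fun_prop))

lemma angle_eq {t t' : ℝ} (ht : t ∈ Set.Icc (0:ℝ) 1) (ht' : t' ∈ Set.Icc (0:ℝ) 1)
    (hcos : Real.cos (2*π*t) = Real.cos (2*π*t'))
    (hsin : Real.sin (2*π*t) = Real.sin (2*π*t')) :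
    t = t' ∨ (t = 1 ∧ t' = 0) ∨ (t = 0 ∧ t' = 1) := by
  have hexp : Complex.exp (↑(2*π*t) * Complex.I) = Complex.exp (↑(2*π*t') * Complex.I) := by
    rw [Complex.exp_mul_I, Complex.exp_mul_I, ← Complex.ofReal_cos, ← Complex.ofReal_cos,
      ← Complex.ofReal_sin, ← Complex.ofReal_sin, hcos, hsin]
  rw [Complex.exp_eq_exp_iff_exists_int] at hexp
  obtain ⟨n, hn⟩ := hexp
  have him := congrArg Complex.im hn
  simp [Complex.add_im, Complex.mul_im] at him
  have hpi : (0:ℝ) < π := Real.pi_pos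
  have hteq : t = t' + n := by nlinarith [him]
  obtain ⟨h0, h1⟩ := ht
  obtain ⟨h0', h1'⟩ := ht'
  have hb1 : (-1:ℤ) ≤ n := by exact_mod_cast show (-1:ℝ) ≤ (n:ℝ) by linarith
  have hb2 : n ≤ (1:ℤ) := by exact_mod_cast show ((n:ℝ)) ≤ 1 by linarith
  interval_cases n
  · right; right
    simp at hteq
    constructor <;> linarith
  · left; simpa using hteq
  · right; left
    push_cast at hteq
    constructor <;> linarith

/-- vmap is independent of t when the radius vanishes -/
lemma vmap_boundary {y : EuclideanSpace ℝ (Fin 2)} (hy : ‖y‖ = 1) (t t' : ℝ) :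
    vmap y t = vmap y t' := by
  have h : rr y = 0 := by simp [rr, hy]
  simp [vmap, h]

lemma vmap_one_zero (y : EuclideanSpace ℝ (Fin 2)) : vmap y 1 = vmap y 0 := by
  simp [vmap, mul_one, mul_zero, Real.cos_two_pi, Real.sin_two_pi]

lemma vmap_inj {y y' : EuclideanSpace ℝ (Fin 2)} {t t' : ℝ}
    (hy : ‖y‖ ≤ 1) (hy' : ‖y'‖ ≤ 1)
    (ht : t ∈ Set.Icc (0:ℝ) 1) (ht' : t' ∈ Set.Icc (0:ℝ) 1)
    (h : vmap y t = vmap y' t') :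
    y = y' ∧ (‖y‖ = 1 ∨ t = t' ∨ (t = 1 ∧ t' = 0) ∨ (t = 0 ∧ t' = 1)) := by
  have h0 := congrFun (congrArg WithLp.ofLp h) 0
  have h1 := congrFun (congrArg WithLp.ofLp h) 1
  have h2 := congrFun (congrArg WithLp.ofLp h) 2
  have h3 := congrFun (congrArg WithLp.ofLp h) 3
  simp only [vmap, WithLp.ofLp_toLp, Matrix.cons_val_zero, Matrix.cons_val_one, Matrix.head_cons,
    Matrix.cons_val_two, Matrix.tail_cons, Matrix.cons_val_three] at h0 h1 h2 h3
  have hyy : y = y' := by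
    ext i
    fin_cases i
    · exact h0
    · exact h1
  refine ⟨hyy, ?_⟩
  subst hyy
  by_cases hb : ‖y‖ = 1
  · exact Or.inl hb
  · right
    have hrpos : 0 < rr y := by
      apply Real.sqrt_pos.mpr
      have := norm_nonneg y
      rcases lt_or_eq_of_le hy with h | h
      · nlinarith
      · exact absurd h hb
    have hc : Real.cos (2*π*t) = Real.cos (2*π*t') := by
      rcases mul_eq_mul_left_iff.mp h2 with h2 | h2
      · exact h2
      · exact absurd h2 hrpos.ne'
    have hs : Real.sin (2*π*t) = Real.sin (2*π*t') := by
      rcases mul_eq_mul_left_iff.mp h3 with h3 | h3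
      · exact h3
      · exact absurd h3 hrpos.ne'
    exact angle_eq ht ht' hc hs

lemma vmap_surj (w : EuclideanSpace ℝ (Fin 4)) (hw : ‖w‖ = 1) :
    ∃ (y : EuclideanSpace ℝ (Fin 2)) (t : ℝ), ‖y‖ ≤ 1 ∧ t ∈ Set.Icc (0:ℝ) 1 ∧ vmap y t = w := by
  set y : EuclideanSpace ℝ (Fin 2) := WithLp.toLp 2 ![w 0, w 1] with hy
  have hsum : w 0 ^2 + w 1 ^2 + w 2 ^2 + w 3 ^2 = 1 := by
    have h1 : Real.sqrt (∑ i : Fin 4, ‖w i‖^2) = 1 := (EuclideanSpace.norm_eq w) ▸ hw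
    have hnn : (0:ℝ) ≤ ∑ i : Fin 4, ‖w i‖^2 := by positivity
    have h2 : (∑ i : Fin 4, ‖w i‖^2) = 1 := by nlinarith [Real.sq_sqrt hnn]
    simpa [Fin.sum_univ_four, sq_abs] using h2
  have hynorm_sq : ‖y‖^2 = w 0 ^2 + w 1 ^2 := by
    rw [norm_sq2]; simp [hy]
  have hy1 : ‖y‖ ≤ 1 := by nlinarith [norm_nonneg y, sq_nonneg (w 2), sq_nonneg (w 3)]
  have hrr : rr y = Real.sqrt (w 2 ^2 + w 3 ^2) := by
    rw [rr, hynorm_sq]; congr 1; linarith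
  set c : ℂ := w 2 + w 3 * Complex.I with hc
  have habs : ‖c‖ = rr y := by
    rw [Complex.norm_def, hc, Complex.normSq_add_mul_I, hrr]
  by_cases hc0 : c = 0
  · have hs0 : w 2 ^2 + w 3 ^2 = 0 := by
      have : Real.sqrt (w 2 ^2 + w 3 ^2) = 0 := by rw [← hrr, ← habs, hc0]; simp
      nlinarith [Real.sq_sqrt (show (0:ℝ) ≤ w 2 ^2 + w 3 ^2 by positivity), this]
    have hw2 : w 2 = 0 := by nlinarith [sq_nonneg (w 2), sq_nonneg (w 3)]
    have hw3 : w 3 = 0 := by nlinarith [sq_nonneg (w 2), sq_nonneg (w 3)]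
    refine ⟨y, 0, hy1, ⟨le_refl _, zero_le_one⟩, ?_⟩
    have hr0 : rr y = 0 := by rw [hrr, hs0]; simp
    ext i
    fin_cases i <;>
      simp [vmap, hr0, hw2, hw3, hy, show rr (WithLp.toLp 2 ![w 0, w 1]) = 0 from hr0]
  · set θ := Complex.arg c with hθ
    have hθub : θ ≤ π := Complex.arg_le_pi c
    have hθlb : -π < θ := Complex.neg_pi_lt_arg c
    have hpi : (0:ℝ) < π := Real.pi_pos
    set t : ℝ := if 0 ≤ θ then θ/(2*π) else θ/(2*π) + 1 with htdef
    have ht : t ∈ Set.Icc (0:ℝ) 1 := by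
      constructor <;> rw [htdef] <;> split <;> rename_i hsgn
      · positivity
      · have : -(1/2 : ℝ) < θ/(2*π) := by
          rw [lt_div_iff₀ (by positivity : (0:ℝ) < 2*π)]
          nlinarith
        linarith
      · have : θ/(2*π) ≤ 1/2 := by
          rw [div_le_iff₀ (by positivity : (0:ℝ) < 2*π)]
          nlinarith
        linarith
      · have : θ/(2*π) < 0 := div_neg_of_neg_of_pos (lt_of_not_ge hsgn) (by positivity)
        linarith
    have h2pt : Real.cos (2*π*t) = Real.cos θ ∧ Real.sin (2*π*t) = Real.sin θ := by
      rw [htdef]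
      split
      · rw [show 2*π*(θ/(2*π)) = θ by field_simp]
        exact ⟨rfl, rfl⟩
      · rw [show 2*π*(θ/(2*π) + 1) = θ + 2*π by field_simp]
        exact ⟨Real.cos_add_two_pi θ, Real.sin_add_two_pi θ⟩
    have hcosθ : rr y * Real.cos θ = w 2 := by
      rw [hθ, Complex.cos_arg hc0, ← habs]
      have h0 : ‖c‖ ≠ 0 := norm_ne_zero_iff.mpr hc0
      have : c.re = w 2 := by simp [hc]
      rw [this]
      field_simp
    have hsinθ : rr y * Real.sin θ = w 3 := by
      rw [hθ, Complex.sin_arg, ← habs]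
      have h0 : ‖c‖ ≠ 0 := norm_ne_zero_iff.mpr hc0
      have : c.im = w 3 := by simp [hc]
      rw [this]
      field_simp
    refine ⟨y, t, hy1, ht, ?_⟩
    ext i
    fin_cases i
    · simp [vmap, hy]
    · simp [vmap, hy]
    · show rr y * Real.cos (2*π*t) = w 2
      rw [h2pt.1, hcosθ]
    · show rr y * Real.sin (2*π*t) = w 3
      rw [h2pt.2, hsinθ]

end OpenBookAux

namespace OpenBookAux

abbrev S1 := Metric.sphere (0:ℂ) 1
abbrev D2 := Metric.closedBall (0 : EuclideanSpace ℝ (Fin 2)) 1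
abbrev S3 := Metric.sphere (0 : EuclideanSpace ℝ (Fin 4)) 1
abbrev I01 := Set.Icc (0:ℝ) 1
abbrev X := (S1 × D2) × I01

def rel : X → X → Prop := fun p q =>
  (p.2.1 = 1 ∧ q.2.1 = 0 ∧ q.1 = p.1) ∨
  (‖(p.1.2 : EuclideanSpace ℝ (Fin 2))‖ = 1 ∧ q.1 = p.1)

def F (p : X) : S1 × S3 :=
  (p.1.1, ⟨vmap p.1.2 p.2, vmap_mem _ (mem_closedBall_zero_iff.mp p.1.2.2) _⟩)

lemma F_respects : ∀ p q : X, rel p q → F p = F q := by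
  rintro p q (⟨h1, h0, hq⟩ | ⟨hb, hq⟩)
  · have hq1 : q.1.1 = p.1.1 := by rw [hq]
    have hq2 : (q.1.2 : EuclideanSpace ℝ (Fin 2)) = p.1.2 := by rw [hq]
    refine Prod.ext hq1.symm (Subtype.ext ?_)
    show vmap p.1.2 p.2 = vmap q.1.2 q.2
    rw [hq2, show ((p.2 : ℝ)) = 1 from h1, show ((q.2 : ℝ)) = 0 from h0, vmap_one_zero]
  · have hq1 : q.1.1 = p.1.1 := by rw [hq]
    have hq2 : (q.1.2 : EuclideanSpace ℝ (Fin 2)) = p.1.2 := by rw [hq]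
    refine Prod.ext hq1.symm (Subtype.ext ?_)
    show vmap p.1.2 p.2 = vmap q.1.2 q.2
    rw [hq2]
    exact vmap_boundary hb _ _

lemma F_continuous : Continuous F := by
  apply Continuous.prodMk
  · exact continuous_fst.comp continuous_fst
  · apply Continuous.subtype_mk
    exact continuous_vmap.comp
      ((continuous_subtype_val.comp (continuous_snd.comp continuous_fst)).prodMk
        (continuous_subtype_val.comp continuous_snd))

lemma F_quot_inj (p q : X) (h : F p = F q) : Quot.mk rel p = Quot.mk rel q := by
  have hz : p.1.1 = q.1.1 := congrArg (fun x : S1 × S3 => x.1) h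
  have hv : vmap p.1.2 p.2 = vmap q.1.2 q.2 :=
    congrArg (fun x => (x.2 : EuclideanSpace ℝ (Fin 4))) h
  obtain ⟨hyy, hcase⟩ := vmap_inj (mem_closedBall_zero_iff.mp p.1.2.2)
    (mem_closedBall_zero_iff.mp q.1.2.2) p.2.2 q.2.2 hv
  have hfst : q.1 = p.1 := Prod.ext hz.symm (Subtype.ext hyy.symm)
  rcases hcase with hb | ht | ⟨ht1, ht0⟩ | ⟨ht0, ht1⟩
  · exact Quot.sound (show rel p q from Or.inr ⟨hb, hfst⟩)
  · have : p = q := Prod.ext hfst.symm (Subtype.ext ht)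
    rw [this]
  · exact Quot.sound (show rel p q from Or.inl ⟨ht1, ht0, hfst⟩)
  · exact (Quot.sound (show rel q p from Or.inl ⟨ht1, ht0, hfst.symm⟩)).symm

end OpenBookAux

open OpenBookAux in
/-- The open book with page the solid torus `S¹ × D²` and trivial monodromy
is `S¹ × S³`. -/
theorem open_book_of_solid_torus_id :
    Nonempty (
      -- the open book Ob(S¹ × D², S¹ × ∂D², id)
      Quot (fun p q : (Metric.sphere (0:ℂ) 1 ×
          Metric.closedBall (0 : EuclideanSpace ℝ (Fin 2)) 1) × Set.Icc (0:ℝ) 1 =>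
        (p.2.1 = 1 ∧ q.2.1 = 0 ∧ q.1 = p.1) ∨
        (‖(p.1.2 : EuclideanSpace ℝ (Fin 2))‖ = 1 ∧ q.1 = p.1))
      ≃ₜ
      -- S¹ × S³
      Metric.sphere (0:ℂ) 1 × Metric.sphere (0 : EuclideanSpace ℝ (Fin 4)) 1) := by
  haveI : CompactSpace S1 := isCompact_iff_compactSpace.mp (isCompact_sphere (0:ℂ) 1)
  haveI : CompactSpace D2 := isCompact_iff_compactSpace.mp
    (isCompact_closedBall (0 : EuclideanSpace ℝ (Fin 2)) 1)
  let G : Quot rel → S1 × S3 := Quot.lift F F_respects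
  have hGc : Continuous G := continuous_quot_lift F_respects F_continuous
  have hGinj : Function.Injective G := by
    intro a b
    induction a using Quot.ind with | _ p =>
    induction b using Quot.ind with | _ q =>
    exact F_quot_inj p q
  have hGsurj : Function.Surjective G := by
    rintro ⟨z, w⟩
    obtain ⟨y, t, hy1, ht, hvw⟩ := vmap_surj w.1 (mem_sphere_zero_iff_norm.mp w.2)
    refine ⟨Quot.mk rel ((z, ⟨y, mem_closedBall_zero_iff.mpr hy1⟩), ⟨t, ht⟩), ?_⟩
    show F ((z, ⟨y, mem_closedBall_zero_iff.mpr hy1⟩), ⟨t, ht⟩) = (z, w)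
    exact Prod.ext rfl (Subtype.ext hvw)
  exact ⟨Continuous.homeoOfEquivCompactToT2
    (f := Equiv.ofBijective G ⟨hGinj, hGsurj⟩) hGc⟩
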